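/- Let Γ be a Coxeter graph with Coxeter system (W,S), let G be a group of symmetries of Γ acting on W, and suppose all G-orbits of S are finite. Suppose that every positive root α ∈ Φ⁺ can be written as w(α_s) for some w ∈ W^G and s ∈ S. If s, t ∈ S, g ∈ G, and t = g(s) ≠ s, then m_{s,t} = 2. -/

import Mathlib

open Real

/-- A Coxeter matrix on the set `S`, with `0` representing the label `∞`. -/
structure CoxeterMat (S : Type*) where
  m : S → S → ℕ
  diagonal : ∀ s, m s s = 1
  symmetric : ∀ s t, m s t = m t s
  off_diagonal : ∀ s t, s ≠ t → m s t ≠ 1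

namespace CoxeterMat

variable {S : Type*} (M : CoxeterMat S)

/-- The coefficient `⟨α_s, α_t⟩ = -2 cos (π / m_{s,t})`, with value `-2` when `m_{s,t} = ∞`. -/
noncomputable def c (s t : S) : ℝ :=
  if M.m s t = 0 then -2 else -2 * Real.cos (Real.pi / (M.m s t : ℝ))

/-- The simple root `α_s` in `V = ⊕_{s ∈ S} ℝ α_s`. -/
noncomputable def sroot (s : S) : S →₀ ℝ := Finsupp.single s 1

/-- The canonical bilinear form of the Coxeter graph. -/
noncomputable def bform : (S →₀ ℝ) →ₗ[ℝ] (S →₀ ℝ) →ₗ[ℝ] ℝ :=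
  Finsupp.lift _ ℝ S fun s => Finsupp.lift ℝ ℝ S fun t => M.c s t

/-- The simple reflection `σ_s : x ↦ x - ⟨α_s, x⟩ α_s`. -/
noncomputable def sigma (s : S) : (S →₀ ℝ) →ₗ[ℝ] (S →₀ ℝ) :=
  LinearMap.id - (M.bform (sroot s)).smulRight (sroot s)

/-- The Coxeter group `W`, realized as the subgroup of linear automorphisms of `V`
generated by the simple reflections. -/
noncomputable def Wgrp : Subgroup ((S →₀ ℝ) ≃ₗ[ℝ] (S →₀ ℝ)) :=
  Subgroup.closure {w | ∃ s : S, (w : (S →₀ ℝ) →ₗ[ℝ] (S →₀ ℝ)) = M.sigma s}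

/-- The canonical root system `Φ = {w(α_s) | w ∈ W, s ∈ S}`. -/
def Phi : Set (S →₀ ℝ) := {b | ∃ w ∈ M.Wgrp, ∃ s : S, b = w (sroot s)}

/-- The set of positive roots. -/
def PhiPos : Set (S →₀ ℝ) := {b | b ∈ M.Phi ∧ ∀ s, 0 ≤ b s}

/-- The equivalence relation `≡` on `Φ` generated by `α ≡₁ β ⟺ ⟨α, β⟩ ∉ {0, 1, -1}`. -/
def equivR : (S →₀ ℝ) → (S →₀ ℝ) → Prop :=
  Relation.EqvGen (fun a b => a ∈ M.Phi ∧ b ∈ M.Phi ∧ M.bform a b ∉ ({0, 1, -1} : Set ℝ))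

/-- The underlying graph of the Coxeter graph: `s` and `t` are joined iff `m_{s,t} ≥ 3`
(including `m_{s,t} = ∞`). -/
def graph : SimpleGraph S where
  Adj s t := s ≠ t ∧ M.m s t ≠ 2
  symm := ⟨fun s t h => ⟨h.1.symm, by rw [M.symmetric]; exact h.2⟩⟩
  loopless := ⟨fun s h => h.1 rfl⟩

/-- The action of a permutation of `S` on `V`. -/
noncomputable def permV (g : Equiv.Perm S) : (S →₀ ℝ) ≃ₗ[ℝ] (S →₀ ℝ) :=
  Finsupp.domLCongr g

/-- The set of elements of `W` fixed by the group `G` of symmetries (acting by conjugation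
by the corresponding permutations of coordinates). -/
noncomputable def WfixG (G : Subgroup (Equiv.Perm S)) :
    Set ((S →₀ ℝ) ≃ₗ[ℝ] (S →₀ ℝ)) :=
  {w | w ∈ M.Wgrp ∧ ∀ g ∈ G, permV g * w = w * permV g}

/-- Construct a simply laced Coxeter matrix from an adjacency relation. -/
noncomputable def ofAdj (A : S → S → Prop) (hs : ∀ s t, A s t → A t s)
    (hi : ∀ s, ¬ A s s) : CoxeterMat S where
  m s t := open Classical in if s = t then 1 else if A s t then 3 else 2
  diagonal s := by simp
  symmetric s t := by
    classical
    by_cases h : s = t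
    · subst h; rfl
    · have h' : t ≠ s := Ne.symm h
      simp only [if_neg h, if_neg h']
      by_cases hA : A s t
      · rw [if_pos hA, if_pos (hs s t hA)]
      · rw [if_neg hA, if_neg (fun h2 => hA (hs t s h2))]
  off_diagonal s t h := by
    classical
    simp only [if_neg h]
    split <;> norm_num

/-- Isomorphism of Coxeter graphs. -/
def Iso {T : Type*} (M : CoxeterMat S) (N : CoxeterMat T) : Prop :=
  ∃ e : S ≃ T, ∀ s t, N.m (e s) (e t) = M.m s t

/-- The full Coxeter subgraph spanned by `Y ⊆ S`. -/
def restrict (Y : Set S) : CoxeterMat Y where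
  m s t := M.m s t
  diagonal s := M.diagonal s
  symmetric s t := M.symmetric s t
  off_diagonal s t h := M.off_diagonal s t (fun hh => h (Subtype.ext hh))

end CoxeterMat

open CoxeterMat

/-- The Coxeter graph `A_n`: a path with `n` vertices. -/
noncomputable def pathA (n : ℕ) : CoxeterMat (Fin n) :=
  ofAdj (fun i j => i.val + 1 = j.val ∨ j.val + 1 = i.val)
    (fun _ _ h => h.symm)
    (fun s h => by rcases h with h | h <;> omega)

/-- The Coxeter graph `D_n`: a path `0 — 1 — ⋯ — (n-2)` together with an extra vertex `n-1`
joined to `n-3`. -/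
noncomputable def Dmat (n : ℕ) : CoxeterMat (Fin n) :=
  ofAdj (fun i j => i ≠ j ∧
      (((i.val + 1 = j.val ∧ j.val ≤ n - 2) ∨ (i.val + 2 = j.val ∧ j.val = n - 1)) ∨
       ((j.val + 1 = i.val ∧ i.val ≤ n - 2) ∨ (j.val + 2 = i.val ∧ i.val = n - 1))))
    (fun _ _ h => ⟨h.1.symm, h.2.symm⟩)
    (fun s h => h.1 rfl)

/-- Adjacency relation determined by a list of edges. -/
def listAdj {n : ℕ} (L : List (Fin n × Fin n)) (i j : Fin n) : Prop :=
  (i, j) ∈ L ∨ (j, i) ∈ L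

instance {n : ℕ} (L : List (Fin n × Fin n)) (i j : Fin n) : Decidable (listAdj L i j) := by
  unfold listAdj; infer_instance

/-- The Coxeter graph `E₆`. -/
noncomputable def E6mat : CoxeterMat (Fin 6) :=
  ofAdj (listAdj [(0,2),(2,3),(3,4),(4,5),(1,3)])
    (fun _ _ h => h.symm) (by decide)

/-- The Coxeter graph `E₇`. -/
noncomputable def E7mat : CoxeterMat (Fin 7) :=
  ofAdj (listAdj [(0,2),(2,3),(3,4),(4,5),(5,6),(1,3)])
    (fun _ _ h => h.symm) (by decide)

/-- The Coxeter graph `E₈`. -/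
noncomputable def E8mat : CoxeterMat (Fin 8) :=
  ofAdj (listAdj [(0,2),(2,3),(3,4),(4,5),(5,6),(6,7),(1,3)])
    (fun _ _ h => h.symm) (by decide)

/-- The Coxeter graph `A_∞`: the one-sided infinite path. -/
noncomputable def Ainf : CoxeterMat ℕ :=
  ofAdj (fun i j => i + 1 = j ∨ j + 1 = i)
    (fun _ _ h => h.symm)
    (fun s h => by omega)

/-- The Coxeter graph `_∞A_∞`: the two-sided infinite path. -/
noncomputable def ZAinf : CoxeterMat ℤ :=
  ofAdj (fun i j => i + 1 = j ∨ j + 1 = i)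
    (fun _ _ h => h.symm)
    (fun s h => by omega)

/-- The Coxeter graph `D_∞`: vertices `0, 1, 2, 3, …` with `0` and `1` joined to `2` and a
path `2 — 3 — 4 — ⋯`. -/
noncomputable def Dinf : CoxeterMat ℕ :=
  ofAdj (fun i j => i ≠ j ∧
      (((i = 0 ∧ j = 2) ∨ (i = 1 ∧ j = 2) ∨ (i + 1 = j ∧ 2 ≤ i)) ∨
       ((j = 0 ∧ i = 2) ∨ (j = 1 ∧ i = 2) ∨ (j + 1 = i ∧ 2 ≤ j))))
    (fun _ _ h => ⟨h.1.symm, h.2.symm⟩)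
    (fun s h => h.1 rfl)

/-- The affine Coxeter graph `Ã_n`: a cycle with `n + 1` vertices. -/
noncomputable def affA (n : ℕ) : CoxeterMat (ZMod (n + 1)) :=
  ofAdj (fun i j => i ≠ j ∧ (i + 1 = j ∨ j + 1 = i))
    (fun _ _ h => ⟨h.1.symm, h.2.symm⟩)
    (fun s h => h.1 rfl)

/-- The affine Coxeter graph `D̃_n` (on `n + 1` vertices, Bourbaki numbering): `0` and `1`
joined to `2`, a path `2 — 3 — ⋯ — (n-1)`, and `n` joined to `n-2`. -/
noncomputable def affD (n : ℕ) : CoxeterMat (Fin (n + 1)) :=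
  ofAdj (fun i j => i ≠ j ∧
      (((i.val = 0 ∧ j.val = 2) ∨ (i.val = 1 ∧ j.val = 2) ∨
        (i.val + 1 = j.val ∧ 2 ≤ i.val ∧ i.val ≤ n - 2) ∨
        (i.val = n - 2 ∧ j.val = n)) ∨
       ((j.val = 0 ∧ i.val = 2) ∨ (j.val = 1 ∧ i.val = 2) ∨
        (j.val + 1 = i.val ∧ 2 ≤ j.val ∧ j.val ≤ n - 2) ∨
        (j.val = n - 2 ∧ i.val = n))))
    (fun _ _ h => ⟨h.1.symm, h.2.symm⟩)
    (fun s h => h.1 rfl)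

/-- The affine Coxeter graph `Ẽ₆` (Bourbaki numbering, affine vertex `0`). -/
noncomputable def affE6 : CoxeterMat (Fin 7) :=
  ofAdj (listAdj [(1,3),(3,4),(4,5),(5,6),(2,4),(0,2)])
    (fun _ _ h => h.symm) (by decide)

/-- The affine Coxeter graph `Ẽ₇` (Bourbaki numbering, affine vertex `0`). -/
noncomputable def affE7 : CoxeterMat (Fin 8) :=
  ofAdj (listAdj [(0,1),(1,3),(3,4),(4,5),(5,6),(6,7),(2,4)])
    (fun _ _ h => h.symm) (by decide)

/-- The affine Coxeter graph `Ẽ₈` (Bourbaki numbering, affine vertex `0`). -/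
noncomputable def affE8 : CoxeterMat (Fin 9) :=
  ofAdj (listAdj [(1,3),(3,4),(4,5),(5,6),(6,7),(7,8),(2,4),(0,8)])
    (fun _ _ h => h.symm) (by decide)

/-!
Put `λ = -c(s,t) ≥ 0`. The root `σ_s(α_t) = α_t + λ α_s` is positive, so it is `w(α_r)` with
`w ∈ W^G`; then `η = w⁻¹(α_s)` and `w⁻¹(α_t) = g(η)` satisfy `g(η) + λ η = α_r`.
Every root is positive or negative: if `ℓ(w σ_s) ≥ ℓ(w)` then `w(α_s) ≥ 0`, by Humphreys'
induction on `ℓ(w)`, which factors `w = v u` with `u` in a rank-two parabolic subgroup `W_{s,t}`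
and `v` of minimal length; in `W_{s,t}` the braid relation and the explicit action, with
Chebyshev coefficients, settle the claim. Since `η` and `g(η)` have the same sign, a negative
`η` makes the `α_r`-coordinate of `g(η) + λ η` nonpositive, while a positive `η` with `λ > 0`
forces `η = g(η) = α_r`, as a nonnegative root supported at `r` is `α_r`; then `λ = 0`.
-/

open Polynomial Polynomial.Chebyshev

namespace Polynomial.Chebyshev

lemma U_eval_cos_pi_div_add_two_mul {n : ℕ} (hn : 2 ≤ n) (j : ℤ) :
    (U ℝ (j + 2 * n)).eval (cos (π / n)) = (U ℝ j).eval (cos (π / n)) := by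
  have hn' : (2 : ℝ) ≤ n := mod_cast hn
  have hsin : sin (π / n) ≠ 0 := (sin_pos_of_pos_of_lt_pi (by positivity)
    (div_lt_self pi_pos (by linarith))).ne'
  refine mul_right_cancel₀ hsin ?_
  rw [U_real_cos, U_real_cos, ← sin_add_two_pi ((j + 1) * (π / n))]
  congr 1
  field_simp
  push_cast
  ring

lemma U_eval_cos_pi_div_nonneg {n : ℕ} (hn : 2 ≤ n) {j : ℤ} (hj : -1 ≤ j) (hjn : j + 1 ≤ n) :
    0 ≤ (U ℝ j).eval (cos (π / n)) := by
  have hn' : (2 : ℝ) ≤ n := mod_cast hn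
  have hsin : 0 < sin (π / n) :=
    sin_pos_of_pos_of_lt_pi (by positivity) (div_lt_self pi_pos (by linarith))
  refine (mul_nonneg_iff_of_pos_right hsin).mp ?_
  rw [U_real_cos]
  have hj' : (0 : ℝ) ≤ j + 1 := by exact_mod_cast (by omega : (0 : ℤ) ≤ j + 1)
  have hjn' : (j + 1 : ℝ) ≤ n := by exact_mod_cast hjn
  apply sin_nonneg_of_nonneg_of_le_pi (by positivity)
  calc (j + 1 : ℝ) * (π / n) ≤ n * (π / n) := by gcongr
    _ = π := by field_simp

end Polynomial.Chebyshev

namespace Finsupp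

variable {ι α : Type*} [Zero α] [Preorder α]

lemma nonneg_iff_forall {f : ι →₀ α} : 0 ≤ f ↔ ∀ i, 0 ≤ f i := by
  simp [Finsupp.le_def]

lemma nonpos_iff_forall {f : ι →₀ α} : f ≤ 0 ↔ ∀ i, f i ≤ 0 := by
  simp [Finsupp.le_def]

end Finsupp

namespace CoxeterMat

variable {S : Type*} (M : CoxeterMat S)

local notation "GLV" => (S →₀ ℝ) ≃ₗ[ℝ] (S →₀ ℝ)

section Form

lemma two_le_m {s t : S} (hst : s ≠ t) (h0 : M.m s t ≠ 0) : 2 ≤ M.m s t := by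
  have := M.off_diagonal s t hst
  omega

lemma c_self (s : S) : M.c s s = 2 := by
  simp [c, M.diagonal s]

lemma c_symm (s t : S) : M.c s t = M.c t s := by
  rw [c, c, M.symmetric]

lemma c_of_m_eq_zero {s t : S} (h0 : M.m s t = 0) : M.c s t = -2 := by
  simp [c, h0]

lemma c_of_m_ne_zero {s t : S} (h0 : M.m s t ≠ 0) :
    M.c s t = -2 * cos (π / M.m s t) := by
  simp [c, h0]

lemma c_nonpos {s t : S} (hst : s ≠ t) : M.c s t ≤ 0 := by
  by_cases h0 : M.m s t = 0
  · rw [M.c_of_m_eq_zero h0]; norm_num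
  · have hm : (2 : ℝ) ≤ M.m s t := mod_cast M.two_le_m hst h0
    have : 0 ≤ cos (π / M.m s t) := cos_nonneg_of_mem_Icc
      ⟨by linarith [pi_pos, div_nonneg pi_pos.le (by linarith : (0 : ℝ) ≤ M.m s t)],
        div_le_div_of_nonneg_left pi_pos.le (by norm_num) hm⟩
    rw [M.c_of_m_ne_zero h0]
    linarith

lemma m_eq_two_of_c_eq_zero {s t : S} (h : M.c s t = 0) : M.m s t = 2 := by
  by_contra hm
  have h0 : M.m s t ≠ 0 := fun h0 => by norm_num [M.c_of_m_eq_zero h0] at h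
  rw [M.c_of_m_ne_zero h0] at h
  rcases Nat.lt_or_gt_of_ne hm with hlt | hgt
  · have h1 : M.m s t = 1 := by omega
    simp [h1] at h
  · have hm : (3 : ℝ) ≤ M.m s t := mod_cast hgt
    have : 0 < cos (π / M.m s t) := cos_pos_of_mem_Ioo
      ⟨by linarith [pi_pos, div_pos pi_pos (by linarith : (0 : ℝ) < M.m s t)],
        by rw [div_lt_div_iff₀ (by linarith) (by norm_num)]; nlinarith [pi_pos]⟩
    linarith

lemma sroot_nonneg (s : S) : 0 ≤ (sroot s : S →₀ ℝ) := Finsupp.single_nonneg.mpr zero_le_one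

lemma bform_sroot_sroot (s t : S) : M.bform (sroot s) (sroot t) = M.c s t := by
  simp [bform, sroot]

lemma bform_symm (x y : S →₀ ℝ) : M.bform x y = M.bform y x := by
  suffices M.bform.flip = M.bform from (LinearMap.congr_fun₂ this y x)
  ext s t
  simpa [bform] using M.c_symm t s

lemma sigma_apply (s : S) (x : S →₀ ℝ) :
    M.sigma s x = x - M.bform (sroot s) x • sroot s := rfl

lemma sigma_sroot (s t : S) : M.sigma s (sroot t) = sroot t - M.c s t • sroot s := by
  rw [sigma_apply, bform_sroot_sroot]

lemma sigma_sroot_self (s : S) : M.sigma s (sroot s) = -sroot s := by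
  rw [sigma_sroot, c_self]
  module

lemma sigma_sigma (s : S) (x : S →₀ ℝ) : M.sigma s (M.sigma s x) = x := by
  simp only [sigma_apply, map_sub, map_smul, bform_sroot_sroot, c_self]
  module

lemma bform_sigma_sigma (s : S) (x y : S →₀ ℝ) :
    M.bform (M.sigma s x) (M.sigma s y) = M.bform x y := by
  simp only [sigma_apply, map_sub, map_smul, LinearMap.sub_apply, LinearMap.smul_apply,
    bform_sroot_sroot, c_self, smul_eq_mul, M.bform_symm x (sroot s)]
  ring

end Form

noncomputable def sigmaE (s : S) : GLV :=
  LinearEquiv.ofInvolutive (M.sigma s) (M.sigma_sigma s)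

@[simp] lemma sigmaE_apply (s : S) (x : S →₀ ℝ) : M.sigmaE s x = M.sigma s x := rfl

lemma sigmaE_mem_Wgrp (s : S) : M.sigmaE s ∈ M.Wgrp :=
  Subgroup.subset_closure ⟨s, rfl⟩

@[simp] lemma sigmaE_mul_self (s : S) : M.sigmaE s * M.sigmaE s = 1 :=
  LinearEquiv.ext (M.sigma_sigma s)

@[simp] lemma sigmaE_inv (s : S) : (M.sigmaE s)⁻¹ = M.sigmaE s :=
  inv_eq_of_mul_eq_one_right (M.sigmaE_mul_self s)

lemma bform_apply_of_mem_Wgrp {w : GLV} (hw : w ∈ M.Wgrp) (x y : S →₀ ℝ) :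
    M.bform (w x) (w y) = M.bform x y := by
  induction hw using Subgroup.closure_induction generalizing x y with
  | mem u hu =>
    obtain ⟨s, hs⟩ := hu
    change M.bform ((u : (S →₀ ℝ) →ₗ[ℝ] (S →₀ ℝ)) x) ((u : (S →₀ ℝ) →ₗ[ℝ] (S →₀ ℝ)) y) = _
    rw [hs, bform_sigma_sigma]
  | one => rfl
  | mul u v _ _ hu hv => exact (hu _ _).trans (hv x y)
  | inv u _ hu => simpa using (hu (u⁻¹ x) (u⁻¹ y)).symm

lemma bform_self_of_mem_Phi {x : S →₀ ℝ} (hx : x ∈ M.Phi) : M.bform x x = 2 := by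
  obtain ⟨w, hw, s, rfl⟩ := hx
  rw [M.bform_apply_of_mem_Wgrp hw, bform_sroot_sroot, c_self]

section Words

noncomputable def wordProd (l : List S) : GLV := (l.map M.sigmaE).prod

@[simp] lemma wordProd_nil : M.wordProd [] = 1 := rfl

@[simp] lemma wordProd_cons (s : S) (l : List S) :
    M.wordProd (s :: l) = M.sigmaE s * M.wordProd l := by
  simp [wordProd]

@[simp] lemma wordProd_append (l l' : List S) :
    M.wordProd (l ++ l') = M.wordProd l * M.wordProd l' := by
  simp [wordProd]

lemma wordProd_singleton (s : S) : M.wordProd [s] = M.sigmaE s := by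
  simp

lemma wordProd_mem_Wgrp (l : List S) : M.wordProd l ∈ M.Wgrp := by
  induction l with
  | nil => exact one_mem _
  | cons s l ih => simpa using mul_mem (M.sigmaE_mem_Wgrp s) ih

lemma wordProd_reverse (l : List S) : M.wordProd l.reverse = (M.wordProd l)⁻¹ := by
  induction l with
  | nil => simp
  | cons s l ih => simp [ih]

lemma exists_wordProd_eq {w : GLV} (hw : w ∈ M.Wgrp) : ∃ l, M.wordProd l = w := by
  induction hw using Subgroup.closure_induction with
  | mem u hu =>
    obtain ⟨s, hs⟩ := hu
    exact ⟨[s], by rw [wordProd_singleton]; exact LinearEquiv.toLinearMap_injective hs.symm⟩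
  | one => exact ⟨[], rfl⟩
  | mul u v _ _ hu hv =>
    obtain ⟨l, rfl⟩ := hu
    obtain ⟨l', rfl⟩ := hv
    exact ⟨l ++ l', M.wordProd_append l l'⟩
  | inv u _ hu =>
    obtain ⟨l, rfl⟩ := hu
    exact ⟨l.reverse, M.wordProd_reverse l⟩

/-- The length of `w` with respect to the simple reflections (`0` if `w ∉ W`). -/
noncomputable def length (w : GLV) : ℕ :=
  sInf {n | ∃ l : List S, l.length = n ∧ M.wordProd l = w}

lemma length_le {l : List S} {w : GLV} (h : M.wordProd l = w) : M.length w ≤ l.length :=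
  Nat.sInf_le ⟨l, rfl, h⟩

lemma exists_reduced_word {w : GLV} (hw : w ∈ M.Wgrp) :
    ∃ l : List S, M.wordProd l = w ∧ l.length = M.length w := by
  obtain ⟨l, hl⟩ := M.exists_wordProd_eq hw
  obtain ⟨l', hl', hw'⟩ := Nat.sInf_mem (⟨l.length, l, rfl, hl⟩ :
    {n | ∃ l : List S, l.length = n ∧ M.wordProd l = w}.Nonempty)
  exact ⟨l', hw', hl'⟩

lemma length_mul_le {v w : GLV} (hv : v ∈ M.Wgrp) (hw : w ∈ M.Wgrp) :
    M.length (v * w) ≤ M.length v + M.length w := by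
  obtain ⟨l, rfl, hl⟩ := M.exists_reduced_word hv
  obtain ⟨l', rfl, hl'⟩ := M.exists_reduced_word hw
  simpa [hl, hl'] using M.length_le (M.wordProd_append l l')

lemma eq_one_of_length_eq_zero {w : GLV} (hw : w ∈ M.Wgrp) (h : M.length w = 0) : w = 1 := by
  obtain ⟨l, rfl, hl⟩ := M.exists_reduced_word hw
  rw [List.length_eq_zero_iff.mp (hl.trans h), wordProd_nil]

lemma exists_shorter_of_not_isChain {l : List S} (h : ¬ l.IsChain (· ≠ ·)) :
    ∃ l' : List S, M.wordProd l' = M.wordProd l ∧ l'.length + 2 = l.length := by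
  induction l with
  | nil => exact absurd .nil h
  | cons s l ih =>
    match l, ih with
    | [], _ => exact absurd (.singleton s) h
    | t :: l, ih =>
      by_cases hst : s = t
      · subst hst
        exact ⟨l, by simp [← mul_assoc], rfl⟩
      · obtain ⟨l', hl', hlen⟩ := ih fun hc => h (List.isChain_cons_cons.mpr ⟨hst, hc⟩)
        exact ⟨s :: l', by simp [hl'], by simp [← hlen]⟩

end Words

section Dihedral

def altWord (a b : S) : ℕ → List S
  | 0 => []
  | k + 1 => a :: altWord b a k

@[simp] lemma altWord_length (a b : S) (k : ℕ) : (altWord a b k).length = k := by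
  induction k generalizing a b with
  | zero => rfl
  | succ k ih => simp [altWord, ih]

lemma exists_altWord_add (a b : S) (k j : ℕ) :
    ∃ R : List S, altWord a b (k + j) = altWord a b k ++ R ∧ R.length = j := by
  induction k generalizing a b with
  | zero => exact ⟨altWord a b j, by simp [altWord]⟩
  | succ k ih =>
    obtain ⟨R, hR, hlen⟩ := ih b a
    exact ⟨R, by rw [Nat.add_right_comm, altWord, hR]; rfl, hlen⟩

lemma eq_altWord_of_isChain {a b : S} {l : List S} (hab : a ≠ b)
    (hl : ∀ x ∈ l, x = a ∨ x = b) (hc : (a :: l).IsChain (· ≠ ·)) :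
    a :: l = altWord a b (l.length + 1) := by
  induction l generalizing a b with
  | nil => rfl
  | cons x l ih =>
    obtain ⟨hax, hc⟩ := List.isChain_cons_cons.mp hc
    obtain rfl : x = b := (hl x List.mem_cons_self).resolve_left (Ne.symm hax)
    have hl' : ∀ y ∈ l, y = x ∨ y = a := fun y hy =>
      (hl y (List.mem_cons_of_mem _ hy)).symm
    change a :: x :: l = a :: altWord x a (l.length + 1)
    rw [ih hab.symm hl' hc]

lemma exists_eq_altWord_of_isChain {s t : S} (hst : s ≠ t) {L : List S} (hL : L ≠ [])
    (hl : ∀ x ∈ L, x = s ∨ x = t) (hc : L.IsChain (· ≠ ·)) :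
    ∃ p q, (p = s ∧ q = t ∨ p = t ∧ q = s) ∧ L = altWord p q L.length := by
  obtain ⟨p, l, rfl⟩ := List.exists_cons_of_ne_nil hL
  have hl' := fun x hx => hl x (List.mem_cons_of_mem p hx)
  rcases hl p List.mem_cons_self with rfl | rfl
  · exact ⟨p, t, .inl ⟨rfl, rfl⟩, eq_altWord_of_isChain hst hl' hc⟩
  · exact ⟨p, s, .inr ⟨rfl, rfl⟩,
      eq_altWord_of_isChain hst.symm (fun x hx => (hl' x hx).symm) hc⟩

/-- For `m_{a,b} ≠ 0` and `θ = π / m_{a,b}` this is `(sin ((j+1)θ) α_a + sin (jθ) α_b) / sin θ`;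
these vectors are the roots of the rank-two subsystem spanned by `α_a` and `α_b`. -/
noncomputable def dihedralRoot (a b : S) (j : ℤ) : S →₀ ℝ :=
  (U ℝ j).eval (-M.c a b / 2) • sroot a + (U ℝ (j - 1)).eval (-M.c a b / 2) • sroot b

lemma dihedralRoot_zero (a b : S) : M.dihedralRoot a b 0 = sroot a := by
  simp [dihedralRoot]

lemma dihedralRoot_one (a b : S) : M.dihedralRoot a b 1 = -M.c a b • sroot a + sroot b := by
  simp only [dihedralRoot, U_one, sub_self, U_zero, eval_mul, eval_ofNat, eval_X, eval_one,
    one_smul, neg_smul, add_left_inj]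
  module

lemma sigma_dihedralRoot (a b : S) (j : ℤ) :
    M.sigma a (M.dihedralRoot b a j) = M.dihedralRoot a b (j + 1) := by
  simp only [dihedralRoot, map_add, map_smul, sigma_sroot, c_self, M.c_symm b a,
    add_sub_cancel_right, U_add_one, eval_sub, eval_mul, eval_ofNat, eval_X]
  module

lemma sigma_mul_sigma_pow_apply_dihedralRoot (a b : S) (n : ℕ) (j : ℤ) :
    ((M.sigmaE a * M.sigmaE b) ^ n) (M.dihedralRoot a b j) = M.dihedralRoot a b (j + 2 * n) := by
  induction n generalizing j with
  | zero => simp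
  | succ n ih =>
    rw [pow_succ, LinearEquiv.mul_apply, LinearEquiv.mul_apply, sigmaE_apply, sigmaE_apply,
      M.sigma_dihedralRoot b a, M.sigma_dihedralRoot a b, ih]
    congr 1
    push_cast
    ring

lemma neg_c_div_two_of_m_ne_zero {a b : S} (h0 : M.m a b ≠ 0) :
    -M.c a b / 2 = cos (π / M.m a b) := by
  rw [M.c_of_m_ne_zero h0]
  ring

lemma dihedralRoot_add_two_mul_m {a b : S} (hab : a ≠ b) (h0 : M.m a b ≠ 0) (j : ℤ) :
    M.dihedralRoot a b (j + 2 * M.m a b) = M.dihedralRoot a b j := by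
  have hm := M.two_le_m hab h0
  rw [dihedralRoot, dihedralRoot, M.neg_c_div_two_of_m_ne_zero h0,
    U_eval_cos_pi_div_add_two_mul hm, add_sub_right_comm, U_eval_cos_pi_div_add_two_mul hm]

lemma c_sq_ne_four {a b : S} (hab : a ≠ b) (h0 : M.m a b ≠ 0) : M.c a b ^ 2 ≠ 4 := by
  have hm : (2 : ℝ) ≤ M.m a b := mod_cast M.two_le_m hab h0
  have hcos : cos (π / M.m a b) < 1 := by
    rw [← cos_zero]
    exact cos_lt_cos_of_nonneg_of_le_pi le_rfl (div_le_self pi_pos.le (by linarith))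
      (by positivity)
  have := M.c_nonpos hab
  rw [M.c_of_m_ne_zero h0] at this ⊢
  nlinarith

lemma sigma_sub_mem_span (a b : S) (x : S →₀ ℝ) :
    M.sigma a x - x ∈ Submodule.span ℝ {sroot a, sroot b} := by
  rw [sigma_apply, sub_sub_cancel_left, ← neg_smul]
  exact Submodule.smul_mem _ _ (Submodule.subset_span (by simp))

lemma eq_one_of_fixes_sroot {a b : S} (hab : M.c a b ^ 2 ≠ 4) {z : GLV} (hz : z ∈ M.Wgrp)
    (ha : z (sroot a) = sroot a) (hb : z (sroot b) = sroot b)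
    (hspan : ∀ x, z x - x ∈ Submodule.span ℝ {sroot a, sroot b}) : z = 1 := by
  ext x : 1
  obtain ⟨p, r, hpr⟩ := Submodule.mem_span_pair.mp (hspan x)
  -- `z x - x` lies in the plane and is orthogonal to it; the form is nondegenerate there.
  have horth : ∀ y, z y = y → M.bform (z x - x) y = 0 := fun y hy => by
    rw [map_sub, LinearMap.sub_apply, ← hy, M.bform_apply_of_mem_Wgrp hz, hy, sub_self]
  have h1 := horth _ ha
  have h2 := horth _ hb
  simp only [← hpr, map_add, map_smul, LinearMap.add_apply, LinearMap.smul_apply,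
    bform_sroot_sroot, c_self, M.c_symm b a, smul_eq_mul] at h1 h2
  have hp : p = 0 := by
    have : p * (4 - M.c a b ^ 2) = 0 := by linear_combination 2 * h1 - M.c a b * h2
    exact (mul_eq_zero.mp this).resolve_right (sub_ne_zero.mpr (Ne.symm hab))
  have hr : r = 0 := by subst hp; linarith
  change z x = x
  rw [← sub_eq_zero, ← hpr, hp, hr, zero_smul, zero_smul, add_zero]

lemma sigma_mul_sigma_pow_m {a b : S} (hab : a ≠ b) (h0 : M.m a b ≠ 0) :
    (M.sigmaE a * M.sigmaE b) ^ M.m a b = 1 := by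
  set ρ := M.sigmaE a * M.sigmaE b
  have hρ : ρ ^ M.m a b ∈ M.Wgrp :=
    pow_mem (mul_mem (M.sigmaE_mem_Wgrp a) (M.sigmaE_mem_Wgrp b)) _
  have hfix : ∀ j, (ρ ^ M.m a b) (M.dihedralRoot a b j) = M.dihedralRoot a b j := fun j => by
    rw [M.sigma_mul_sigma_pow_apply_dihedralRoot, M.dihedralRoot_add_two_mul_m hab h0]
  have ha : (ρ ^ M.m a b) (sroot a) = sroot a := by simpa [dihedralRoot_zero] using hfix 0
  have hb : (ρ ^ M.m a b) (sroot b) = sroot b := by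
    simpa [dihedralRoot_one, ha] using hfix 1
  refine M.eq_one_of_fixes_sroot (M.c_sq_ne_four hab h0) hρ ha hb fun x => ?_
  induction M.m a b generalizing x with
  | zero => simp
  | succ n ih =>
    have key : (ρ ^ (n + 1)) x - x
        = (M.sigma a (M.sigma b ((ρ ^ n) x)) - M.sigma b ((ρ ^ n) x))
          + (M.sigma b ((ρ ^ n) x) - (ρ ^ n) x) + ((ρ ^ n) x - x) := by
      rw [pow_succ']
      simp [ρ]
    rw [key]
    refine add_mem (add_mem (M.sigma_sub_mem_span a b _) ?_) (ih x)
    rw [Set.pair_comm]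
    exact M.sigma_sub_mem_span b a _

lemma wordProd_altWord_two_mul (a b : S) (j : ℕ) :
    M.wordProd (altWord a b (2 * j)) = (M.sigmaE a * M.sigmaE b) ^ j := by
  induction j with
  | zero => rfl
  | succ j ih =>
    rw [mul_add_one, altWord, altWord, wordProd_cons, wordProd_cons, ih, pow_succ', mul_assoc]

lemma wordProd_altWord_two_mul_add_one (a b : S) (j : ℕ) :
    M.wordProd (altWord a b (2 * j + 1)) = (M.sigmaE a * M.sigmaE b) ^ j * M.sigmaE a := by
  induction j with
  | zero => simp [altWord]
  | succ j ih =>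
    rw [mul_add_one, altWord, altWord, wordProd_cons, wordProd_cons, ih, pow_succ']
    simp only [mul_assoc]

lemma wordProd_altWord_m_comm {a b : S} (hab : a ≠ b) (h0 : M.m a b ≠ 0) :
    M.wordProd (altWord a b (M.m a b)) = M.wordProd (altWord b a (M.m a b)) := by
  have hρ := M.sigma_mul_sigma_pow_m hab h0
  have hinv : M.sigmaE b * M.sigmaE a = (M.sigmaE a * M.sigmaE b)⁻¹ := by simp
  obtain ⟨j, hj | hj⟩ := Nat.even_or_odd' (M.m a b)
  · rw [hj, wordProd_altWord_two_mul, wordProd_altWord_two_mul, hinv, inv_pow,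
      eq_inv_iff_mul_eq_one, ← pow_add, ← two_mul, ← hj, hρ]
  · rw [hj, wordProd_altWord_two_mul_add_one, wordProd_altWord_two_mul_add_one, hinv, inv_pow,
      eq_inv_mul_iff_mul_eq, ← mul_assoc, ← pow_add, ← two_mul]
    refine (eq_inv_of_mul_eq_one_left ?_).trans (M.sigmaE_inv b)
    rw [mul_assoc, ← pow_succ, ← hj, hρ]

lemma length_wordProd_altWord_add_two_le {a b : S} (hab : a ≠ b) (h0 : M.m a b ≠ 0) {k : ℕ}
    (hk : M.m a b ≤ k) : M.length (M.wordProd (altWord a b (k + 1))) + 2 ≤ k + 1 := by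
  obtain ⟨n, hn⟩ : ∃ n, M.m a b = n + 1 := Nat.exists_eq_succ_of_ne_zero h0
  obtain ⟨j, rfl⟩ := Nat.exists_eq_add_of_le hk
  obtain ⟨R, hR, hRlen⟩ := exists_altWord_add b a (M.m a b) j
  -- The braid relation turns the leading `a (b a …)` into `a (a b …)`, and the two `a`s cancel.
  have key : M.wordProd (altWord a b (M.m a b + j + 1)) = M.wordProd (altWord b a n ++ R) := by
    rw [altWord, hR, wordProd_cons, wordProd_append, M.symmetric,
      M.wordProd_altWord_m_comm hab.symm (by rwa [M.symmetric]), M.symmetric, hn, altWord,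
      wordProd_cons, ← mul_assoc, ← mul_assoc, sigmaE_mul_self, one_mul, wordProd_append]
  have := M.length_le key.symm
  simp only [List.length_append, altWord_length] at this
  omega

lemma wordProd_altWord_apply {p q y : S} {k : ℕ} {l : List S}
    (h : altWord p q (k + 1) = l ++ [y]) : M.wordProd l (sroot y) = M.dihedralRoot p q k := by
  induction k generalizing p q l with
  | zero =>
    obtain _ | ⟨x, l⟩ := l
    · obtain rfl : p = y := by simpa [altWord] using h
      simp [dihedralRoot_zero]
    · simp [altWord] at h
  | succ k ih =>
    obtain _ | ⟨x, l⟩ := l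
    · simp [altWord] at h
    change p :: altWord q p (k + 1) = x :: (l ++ [y]) at h
    obtain ⟨rfl, htail⟩ := List.cons_eq_cons.mp h
    rw [wordProd_cons, LinearEquiv.mul_apply, ih htail, sigmaE_apply, sigma_dihedralRoot]
    push_cast
    rfl

lemma U_eval_neg_c_div_two_nonneg {a b : S} (hab : a ≠ b) {k : ℕ}
    (hk : M.m a b = 0 ∨ k < M.m a b) {j : ℤ} (hj : -1 ≤ j) (hjk : j ≤ k) :
    0 ≤ (U ℝ j).eval (-M.c a b / 2) := by
  by_cases h0 : M.m a b = 0
  · rw [M.c_of_m_eq_zero h0, show -(-2 : ℝ) / 2 = 1 by norm_num, U_eval_one]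
    exact_mod_cast (by omega : (0 : ℤ) ≤ j + 1)
  · rw [M.neg_c_div_two_of_m_ne_zero h0]
    exact U_eval_cos_pi_div_nonneg (M.two_le_m hab h0) hj (by omega)

lemma nonneg_apply_dihedralRoot {a b : S} (hab : a ≠ b) {k : ℕ}
    (hk : M.m a b = 0 ∨ k < M.m a b) {v : (S →₀ ℝ) →ₗ[ℝ] (S →₀ ℝ)}
    (ha : 0 ≤ v (sroot a)) (hb : 0 ≤ v (sroot b)) : 0 ≤ v (M.dihedralRoot a b k) := by
  rw [dihedralRoot, map_add, map_smul, map_smul]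
  exact add_nonneg
    (smul_nonneg (M.U_eval_neg_c_div_two_nonneg hab hk (by omega) le_rfl) ha)
    (smul_nonneg (M.U_eval_neg_c_div_two_nonneg hab hk (by omega) (by omega)) hb)

lemma nonneg_apply_wordProd_apply_sroot {s t : S} (hst : s ≠ t) {l : List S}
    (hl : ∀ x ∈ l, x = s ∨ x = t) (hlen : l.length ≤ M.length (M.wordProd (l ++ [s])))
    {v : (S →₀ ℝ) →ₗ[ℝ] (S →₀ ℝ)} (hvs : 0 ≤ v (sroot s)) (hvt : 0 ≤ v (sroot t)) :
    0 ≤ v (M.wordProd l (sroot s)) := by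
  have hl' : ∀ x ∈ l ++ [s], x = s ∨ x = t := fun x hx => by
    rcases List.mem_append.mp hx with hx | hx
    · exact hl x hx
    · exact .inl (List.mem_singleton.mp hx)
  have hchain : (l ++ [s]).IsChain (· ≠ ·) := by
    by_contra h
    obtain ⟨l', hl'eq, hl'len⟩ := M.exists_shorter_of_not_isChain h
    have := M.length_le hl'eq
    simp only [List.length_append, List.length_singleton] at hl'len
    omega
  obtain ⟨p, q, hpq, hL⟩ := exists_eq_altWord_of_isChain hst (by simp) hl' hchain
  rw [List.length_append, List.length_singleton] at hL
  have hpq' : p ≠ q := by rcases hpq with ⟨rfl, rfl⟩ | ⟨rfl, rfl⟩ <;> [exact hst; exact hst.symm]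
  have hk : M.m p q = 0 ∨ l.length < M.m p q := by
    by_contra! h
    have := M.length_wordProd_altWord_add_two_le hpq' h.1 h.2
    rw [← hL] at this
    omega
  rw [M.wordProd_altWord_apply hL.symm]
  rcases hpq with ⟨rfl, rfl⟩ | ⟨rfl, rfl⟩
  · exact M.nonneg_apply_dihedralRoot hpq' hk hvs hvt
  · exact M.nonneg_apply_dihedralRoot hpq' hk hvt hvs

end Dihedral

section Positivity

lemma exists_length_mul_sigmaE_lt {w : GLV} (hw : w ∈ M.Wgrp) (h : M.length w ≠ 0) :
    ∃ t, M.length (w * M.sigmaE t) < M.length w := by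
  obtain ⟨l, rfl, hl⟩ := M.exists_reduced_word hw
  obtain ⟨l, t, rfl⟩ := (List.eq_nil_or_concat' l).resolve_left (by rintro rfl; simp_all)
  refine ⟨t, ?_⟩
  have := M.length_le (l := l) (w := M.wordProd (l ++ [t]) * M.sigmaE t) (by simp [mul_assoc])
  simp only [List.length_append, List.length_singleton] at hl
  omega

/-- Humphreys' choice (*Reflection groups and Coxeter groups*, §5.5) of a shortest `v` with
`w = v u`, `u ∈ W_{s,t}` and `ℓ(v) + ℓ(u) = ℓ(w)`. -/
lemma exists_min_parabolic_factor {w : GLV} (hw : w ∈ M.Wgrp) (s : S) {t : S}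
    (ht : M.length (w * M.sigmaE t) < M.length w) :
    ∃ v ∈ M.Wgrp, ∃ l : List S, (∀ x ∈ l, x = s ∨ x = t) ∧ w = v * M.wordProd l ∧
      M.length v + l.length ≤ M.length w ∧ M.length v < M.length w ∧
      M.length v ≤ M.length (v * M.sigmaE s) ∧ M.length v ≤ M.length (v * M.sigmaE t) := by
  classical
  let P : ℕ → Prop := fun n => ∃ v ∈ M.Wgrp, ∃ l : List S, (∀ x ∈ l, x = s ∨ x = t) ∧
    w = v * M.wordProd l ∧ M.length v + l.length ≤ M.length w ∧ M.length v = n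
  have hPt : P (M.length (w * M.sigmaE t)) := ⟨_, mul_mem hw (M.sigmaE_mem_Wgrp t), [t],
    by simp, by simp [mul_assoc], by simp; omega, rfl⟩
  have hP : ∃ n, P n := ⟨_, hPt⟩
  obtain ⟨v, hv, l, hl, hwvl, hlen, hvn⟩ := Nat.find_spec hP
  have hmin : ∀ c, c = s ∨ c = t → M.length v ≤ M.length (v * M.sigmaE c) := fun c hc => by
    by_contra! hlt
    have := Nat.find_min' hP ⟨v * M.sigmaE c, mul_mem hv (M.sigmaE_mem_Wgrp c), c :: l,
      by simpa [hc] using hl,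
      by rw [hwvl, wordProd_cons, ← mul_assoc, mul_assoc v, sigmaE_mul_self, mul_one],
      by simp; omega, rfl⟩
    omega
  have hvw : M.length v < M.length w := by
    have := Nat.find_min' hP hPt
    omega
  exact ⟨v, hv, l, hl, hwvl, hlen, hvw, hmin s (.inl rfl), hmin t (.inr rfl)⟩

theorem nonneg_apply_sroot_of_length_le {w : GLV} (hw : w ∈ M.Wgrp) {s : S}
    (h : M.length w ≤ M.length (w * M.sigmaE s)) : 0 ≤ w (sroot s) := by
  induction hn : M.length w using Nat.strong_induction_on generalizing w s with
  | _ n ih =>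
  rcases Nat.eq_zero_or_pos n with rfl | hpos
  · rw [M.eq_one_of_length_eq_zero hw hn]
    exact sroot_nonneg s
  obtain ⟨t, ht⟩ := M.exists_length_mul_sigmaE_lt hw (by omega)
  have hst : s ≠ t := by rintro rfl; omega
  obtain ⟨v, hv, l, hl, rfl, hlen, hvw, hvs, hvt⟩ := M.exists_min_parabolic_factor hw s ht
  have hlen' : l.length ≤ M.length (M.wordProd (l ++ [s])) := by
    have hws : v * M.wordProd l * M.sigmaE s = v * M.wordProd (l ++ [s]) := by simp [mul_assoc]
    have := M.length_mul_le hv (M.wordProd_mem_Wgrp (l ++ [s]))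
    rw [← hws] at this
    omega
  exact M.nonneg_apply_wordProd_apply_sroot hst hl hlen' (v := v.toLinearMap)
    (ih _ (hn ▸ hvw) hv hvs rfl) (ih _ (hn ▸ hvw) hv hvt rfl)

theorem nonneg_or_nonpos_of_mem_Phi {x : S →₀ ℝ} (hx : x ∈ M.Phi) : 0 ≤ x ∨ x ≤ 0 := by
  obtain ⟨w, hw, s, rfl⟩ := hx
  by_cases h : M.length w ≤ M.length (w * M.sigmaE s)
  · exact .inl (M.nonneg_apply_sroot_of_length_le hw h)
  · have hws : w * M.sigmaE s * M.sigmaE s = w := by simp [mul_assoc]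
    have := M.nonneg_apply_sroot_of_length_le (mul_mem hw (M.sigmaE_mem_Wgrp s)) (s := s)
      (by rw [hws]; omega)
    rw [LinearEquiv.mul_apply, sigmaE_apply, sigma_sroot_self, map_neg] at this
    exact .inr (neg_nonneg.mp this)

end Positivity

section Symmetry

lemma sigma_sroot_mem_PhiPos {s t : S} (hst : s ≠ t) : M.sigma s (sroot t) ∈ M.PhiPos := by
  refine ⟨⟨M.sigmaE s, M.sigmaE_mem_Wgrp s, t, rfl⟩, Finsupp.nonneg_iff_forall.mp ?_⟩
  rw [sigma_sroot, sub_eq_add_neg, ← neg_smul]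
  exact add_nonneg (sroot_nonneg t) (smul_nonneg (neg_nonneg.mpr (M.c_nonpos hst)) (sroot_nonneg s))

lemma eq_sroot_of_mem_Phi {x : S →₀ ℝ} (hx : x ∈ M.Phi) (hx0 : 0 ≤ x) {r : S}
    (hsupp : ∀ u ≠ r, x u = 0) : x = sroot r := by
  have hxr : x = x r • sroot r := by
    ext u
    by_cases hu : u = r
    · simp [hu, sroot]
    · simp [sroot, hsupp u hu, Ne.symm hu]
  have h2 := M.bform_self_of_mem_Phi hx
  rw [hxr, map_smul, map_smul, LinearMap.smul_apply, bform_sroot_sroot, c_self, smul_eq_mul,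
    smul_eq_mul] at h2
  have : (x r - 1) * (x r + 1) = 0 := by linarith
  have : x r = 1 := by
    rcases mul_eq_zero.mp this with h | h
    · linarith
    · linarith [Finsupp.nonneg_iff_forall.mp hx0 r]
  rw [hxr, this, one_smul]

lemma add_smul_ne_sroot_of_nonneg {x y : S →₀ ℝ} (hx : x ∈ M.Phi) (hy : y ∈ M.Phi)
    (hx0 : 0 ≤ x) (hy0 : 0 ≤ y) {a : ℝ} (ha : 0 < a) (r : S) : y + a • x ≠ sroot r := by
  classical
  intro h
  have hcoord : ∀ u, y u + a * x u = sroot r u := fun u => by simpa using congr($h u)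
  have hsupp : ∀ u ≠ r, x u = 0 ∧ y u = 0 := fun u hu => by
    have := hcoord u
    rw [sroot, Finsupp.single_apply, if_neg (Ne.symm hu)] at this
    have := Finsupp.nonneg_iff_forall.mp hx0 u
    have := Finsupp.nonneg_iff_forall.mp hy0 u
    constructor <;> nlinarith
  have := hcoord r
  rw [M.eq_sroot_of_mem_Phi hx hx0 fun u hu => (hsupp u hu).1,
    M.eq_sroot_of_mem_Phi hy hy0 fun u hu => (hsupp u hu).2] at this
  simp only [sroot, Finsupp.single_eq_same, mul_one, add_eq_left] at this
  linarith

lemma add_smul_ne_sroot_of_nonpos {x y : S →₀ ℝ} (hx0 : x ≤ 0) (hy0 : y ≤ 0) {a : ℝ}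
    (ha : 0 ≤ a) (r : S) : y + a • x ≠ sroot r := by
  intro h
  have hle : y + a • x ≤ 0 := add_nonpos hy0 (smul_nonpos_of_nonneg_of_nonpos ha hx0)
  rw [h] at hle
  have := Finsupp.nonpos_iff_forall.mp hle r
  norm_num [sroot] at this

lemma permV_sroot (g : Equiv.Perm S) (s : S) : permV g (sroot s) = sroot (g s) := by
  simp [permV, sroot]

lemma permV_apply (g : Equiv.Perm S) (x : S →₀ ℝ) (u : S) : permV g x u = x (g.symm u) := by
  simp [permV]

lemma permV_nonneg (g : Equiv.Perm S) {x : S →₀ ℝ} (hx : 0 ≤ x) : 0 ≤ permV g x :=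
  Finsupp.nonneg_iff_forall.mpr fun u => by
    rw [permV_apply]
    exact Finsupp.nonneg_iff_forall.mp hx _

lemma permV_nonpos (g : Equiv.Perm S) {x : S →₀ ℝ} (hx : x ≤ 0) : permV g x ≤ 0 :=
  Finsupp.nonpos_iff_forall.mpr fun u => by
    rw [permV_apply]
    exact Finsupp.nonpos_iff_forall.mp hx _

end Symmetry

end CoxeterMat

theorem stmt12_general {S : Type*} (M : CoxeterMat S) (G : Subgroup (Equiv.Perm S))
    (hpos : ∀ a ∈ M.PhiPos, ∃ w ∈ M.WfixG G, ∃ s : S, a = w (sroot s))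
    (s t : S) (g : Equiv.Perm S) (hg : g ∈ G) (hts : t = g s) (hne : t ≠ s) :
    M.m s t = 2 := by
  obtain ⟨w, ⟨hw, hwG⟩, r, hr⟩ := hpos _ (M.sigma_sroot_mem_PhiPos hne.symm)
  set η := w⁻¹ (sroot s)
  have hη : η ∈ M.Phi := ⟨w⁻¹, inv_mem hw, s, rfl⟩
  have hγ : w⁻¹ (sroot t) = permV g η := by
    have hcomm : Commute (permV g) w⁻¹ := Commute.inv_right (hwG g hg)
    rw [hts, ← permV_sroot, ← LinearEquiv.mul_apply, ← hcomm.eq, LinearEquiv.mul_apply]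
  have hγΦ : permV g η ∈ M.Phi := hγ ▸ ⟨w⁻¹, inv_mem hw, t, rfl⟩
  have hsum : permV g η + (-M.c s t) • η = sroot r := by
    rw [← hγ, ← map_smul, ← map_add, neg_smul, ← sub_eq_add_neg, ← sigma_sroot, hr]
    simp
  by_contra hm
  have hc : 0 < -M.c s t := neg_pos.mpr <|
    (M.c_nonpos hne.symm).lt_of_ne fun h => hm (M.m_eq_two_of_c_eq_zero h)
  rcases M.nonneg_or_nonpos_of_mem_Phi hη with h | h
  · exact M.add_smul_ne_sroot_of_nonneg hη hγΦ h (permV_nonneg g h) hc r hsum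
  · exact add_smul_ne_sroot_of_nonpos h (permV_nonpos g h) hc.le r hsum

/-- Let `G` be a group of symmetries of `Γ` with all orbits of `S` finite. If every positive
root is of the form `w(α_s)` with `w ∈ W^G`, and `t = g(s) ≠ s` for some `g ∈ G`, then
`m_{s,t} = 2`. -/
theorem stmt12 {S : Type*} (M : CoxeterMat S) (G : Subgroup (Equiv.Perm S))
    (hG : ∀ g ∈ G, ∀ s t, M.m (g s) (g t) = M.m s t)
    (hfin : ∀ s : S, {t | ∃ g ∈ G, g s = t}.Finite)
    (hpos : ∀ a ∈ M.PhiPos, ∃ w ∈ M.WfixG G, ∃ s : S, a = w (sroot s))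
    (s t : S) (g : Equiv.Perm S) (hg : g ∈ G) (hts : t = g s) (hne : t ≠ s) :
    M.m s t = 2 :=
  stmt12_general M G hpos s t g hg hts hne
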